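/- The arc length of a cubic Bézier curve is bounded above by the perimeter of its control polygon: ∫₀¹ ‖B'(t)‖ dt ≤ ‖P₁-P₀‖ + ‖P₂-P₁‖ + ‖P₃-P₂‖. -/
import Mathlib


noncomputable def bezierDeriv (P₀ P₁ P₂ P₃ : EuclideanSpace ℝ (Fin 2)) (t : ℝ) :
    EuclideanSpace ℝ (Fin 2) :=
  (3:ℝ) • ((1 - t)^2 • (P₁ - P₀) + (2 * (1 - t) * t) • (P₂ - P₁) + t^2 • (P₃ - P₂))

theorem bezier_arclength_le_control_polygon (P₀ P₁ P₂ P₃ : EuclideanSpace ℝ (Fin 2)) :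
    (∫ t in (0:ℝ)..1, ‖bezierDeriv P₀ P₁ P₂ P₃ t‖)
      ≤ ‖P₁ - P₀‖ + ‖P₂ - P₁‖ + ‖P₃ - P₂‖ := by
  set a := P₁ - P₀
  set b := P₂ - P₁
  set c := P₃ - P₂
  have key : (∫ t in (0:ℝ)..1, ‖bezierDeriv P₀ P₁ P₂ P₃ t‖)
      ≤ ∫ t in (0:ℝ)..1, (3*(1-t)^2*‖a‖ + 6*((1-t)*t)*‖b‖ + 3*t^2*‖c‖) := by
    apply intervalIntegral.integral_mono_on (by norm_num)
    · apply Continuous.intervalIntegrable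
      unfold bezierDeriv
      fun_prop
    · apply Continuous.intervalIntegrable
      fun_prop
    · intro t ht
      unfold bezierDeriv
      calc ‖(3:ℝ) • ((1 - t)^2 • a + (2 * (1 - t) * t) • b + t^2 • c)‖
          ≤ 3 * (‖(1 - t)^2 • a‖ + ‖(2 * (1 - t) * t) • b‖ + ‖t^2 • c‖) := by
            rw [norm_smul]
            gcongr
            · norm_num
            · exact (norm_add_le _ _).trans (by gcongr; exact norm_add_le _ _)
        _ ≤ 3*(1-t)^2*‖a‖ + 6*((1-t)*t)*‖b‖ + 3*t^2*‖c‖ := by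
            rw [norm_smul, norm_smul, norm_smul]
            have h1 : (0:ℝ) ≤ 1 - t := by linarith [ht.2]
            have h2 : (0:ℝ) ≤ t := ht.1
            rw [Real.norm_eq_abs, Real.norm_eq_abs, Real.norm_eq_abs,
              abs_of_nonneg (by positivity), abs_of_nonneg (by positivity),
              abs_of_nonneg (by positivity)]
            ring_nf
            exact le_rfl
  refine key.trans_eq ?_
  have heq : ∀ t : ℝ, 3*(1-t)^2*‖a‖ + 6*((1-t)*t)*‖b‖ + 3*t^2*‖c‖
      = (‖a‖*3) + ((‖b‖*6 - ‖a‖*6) * t + (‖a‖*3 - ‖b‖*6 + ‖c‖*3) * t^2) := by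
    intro t; ring
  simp_rw [heq]
  rw [intervalIntegral.integral_add (by apply Continuous.intervalIntegrable; fun_prop)
      (by apply Continuous.intervalIntegrable; fun_prop),
    intervalIntegral.integral_add (by apply Continuous.intervalIntegrable; fun_prop)
      (by apply Continuous.intervalIntegrable; fun_prop),
    intervalIntegral.integral_const_mul, intervalIntegral.integral_const_mul,
    intervalIntegral.integral_const_mul,
    intervalIntegral.integral_const, integral_id, integral_pow]
  norm_num
  ring
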